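/- Let w_1,…,w_m be pairwise distinct complex numbers and set v(z) = Σ_{s=1}^m 2/(z−w_s)². For each j, let c_{j,n} denote the n-th Taylor coefficient at w_j of the function z ↦ Σ_{s≠j} 2/(z−w_s)² (which is analytic at w_j). Then the following are equivalent: (i) for every j = 1,…,m, Σ_{s≠j} 1/(w_s−w_j)³ = 0; (ii) for every j = 1,…,m, c_{j,1} = 0; (iii) for every j = 1,…,m, there exists a formal power series U ∈ ℂ[[T]] such that, with u = −T^{−1} + U, the formal Laurent series u² + u′ equals 2T^{−2} + Σ_{n≥0} c_{j,n} T^n (the Laurent expansion of v at w_j). -/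

import Mathlib

open Finset

/-- The formal derivative of a Laurent series: `(Σ aₙ Tⁿ)' = Σ n aₙ Tⁿ⁻¹`. -/
noncomputable def lderiv (f : LaurentSeries ℂ) : LaurentSeries ℂ :=
  HahnSeries.single (-1 : ℤ) (1 : ℂ) *
    { coeff := fun n => (n : ℂ) * f.coeff n
      isPWO_support' := f.isPWO_support'.mono (by
        intro n hn
        simp only [Function.mem_support] at hn ⊢
        exact fun h => hn (by rw [h, mul_zero])) }

/-- The `n`-th Taylor coefficient at `w j` of `z ↦ Σ_{s ≠ j} 2/(z - w s)²`
(the regular part of the potential `v(z) = Σ_s 2/(z - w s)²` at `w j`). -/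
noncomputable def taylorCoeff {m : ℕ} (w : Fin m → ℂ) (j : Fin m) (n : ℕ) : ℂ :=
  iteratedDeriv n (fun z => ∑ s ∈ univ.erase j, 2 / (z - w s) ^ 2) (w j) / (n.factorial : ℂ)

/-!
Writing `u = -T⁻¹ + U`, the Miura equation `u² + u' = 2T⁻² + c` is equivalent to
`T (U² + U' - c) = 2U`, i.e. to `U₀ = 0` and `(n - 1) U_{n+1} = c_n - (U²)_n` for all `n`.
It can be solved for `U_{n+1}` whenever `n ≠ 1`, while at `n = 1` it reads
`c₁ = (U²)₁ = 2 U₀ U₁ = 0`; so a solution exists iff `c₁ = 0`.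
Finally `c_{j,1}` is the derivative at `w_j` of `Σ_{s ≠ j} 2/(z - w_s)²`, namely
`4 Σ_{s ≠ j} 1/(w_s - w_j)³`.
-/

namespace PowerSeries

theorem coeff_one_sq {R : Type*} [CommSemiring R] (U : R⟦X⟧) :
    coeff 1 (U ^ 2) = 2 * coeff 0 U * coeff 1 U := by
  rw [sq, coeff_mul, Nat.sum_antidiagonal_succ, Nat.antidiagonal_zero, sum_singleton]
  ring

variable {K : Type*} [Field K]

/-- The coefficients of a solution `U = mk (miuraCoeff c)` of `X (U² + U' - mk c) = 2 U`;
at `n = 1` the division by zero sets the free coefficient `coeff 2 U` to `0`. -/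
noncomputable def miuraCoeff (c : ℕ → K) : ℕ → K
  | 0 => 0
  | n + 1 => (c n - ∑ p ∈ (antidiagonal n).attach, miuraCoeff c p.1.1 * miuraCoeff c p.1.2) / (n - 1)
  decreasing_by
  · exact Nat.antidiagonal.fst_lt p.2
  · exact Nat.antidiagonal.snd_lt p.2

theorem miuraCoeff_succ (c : ℕ → K) (n : ℕ) :
    miuraCoeff c (n + 1) = (c n - coeff n (mk (miuraCoeff c) ^ 2)) / (n - 1) := by
  rw [miuraCoeff, sum_attach (antidiagonal n) fun p => miuraCoeff c p.1 * miuraCoeff c p.2, sq,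
    coeff_mul]
  simp only [coeff_mk]

variable [CharZero K]

theorem X_mul_sq_add_derivative_sub_eq_two_mul_iff (U c : K⟦X⟧) :
    X * (U ^ 2 + d⁄dX K U - c) = 2 * U ↔
      coeff 0 U = 0 ∧ ∀ n : ℕ, ((n : K) - 1) * coeff (n + 1) U = coeff n c - coeff n (U ^ 2) := by
  rw [PowerSeries.ext_iff, ← Nat.and_forall_add_one]
  simp only [two_mul, map_add, coeff_zero_X_mul, coeff_succ_X_mul, map_sub, coeff_derivative]
  refine and_congr ⟨fun h => by linear_combination -h / 2, fun h => by linear_combination -2 * h⟩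
    (forall_congr' fun n => ?_)
  constructor <;> intro h <;> linear_combination h

theorem exists_X_mul_sq_add_derivative_sub_eq_two_mul_iff (c : K⟦X⟧) :
    (∃ U : K⟦X⟧, X * (U ^ 2 + d⁄dX K U - c) = 2 * U) ↔ coeff 1 c = 0 := by
  simp_rw [X_mul_sq_add_derivative_sub_eq_two_mul_iff]
  constructor
  · rintro ⟨U, h0, hsucc⟩
    simpa [coeff_one_sq, h0, eq_comm] using hsucc 1
  · intro hc
    refine ⟨mk (miuraCoeff fun n => coeff n c), by simp [miuraCoeff], fun n => ?_⟩
    rcases eq_or_ne n 1 with rfl | hn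
    · simp [coeff_one_sq, miuraCoeff, hc]
    · have : (n : K) - 1 ≠ 0 := sub_ne_zero.mpr (by exact_mod_cast hn)
      rw [coeff_mk, miuraCoeff_succ, mul_div_cancel₀ _ this]

end PowerSeries

section Laurent

open PowerSeries

theorem lderiv_coeff (f : LaurentSeries ℂ) (n : ℤ) :
    (lderiv f).coeff n = ((n + 1 : ℤ) : ℂ) * f.coeff (n + 1) := by
  conv_lhs => rw [lderiv, ← add_neg_cancel_right n 1, HahnSeries.coeff_single_mul_add, one_mul]

theorem lderiv_add (f g : LaurentSeries ℂ) : lderiv (f + g) = lderiv f + lderiv g := by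
  ext n; simp [lderiv_coeff, mul_add]

theorem lderiv_neg (f : LaurentSeries ℂ) : lderiv (-f) = -lderiv f := by
  ext n; simp [lderiv_coeff]

theorem lderiv_single (n : ℤ) (a : ℂ) :
    lderiv (HahnSeries.single n a) = HahnSeries.single (n - 1) (n * a) := by
  ext k
  rw [lderiv_coeff, HahnSeries.coeff_single, HahnSeries.coeff_single]
  rcases eq_or_ne k (n - 1) with rfl | hk
  · simp
  · rw [if_neg (by omega), if_neg hk, mul_zero]

theorem lderiv_ofPowerSeries (U : ℂ⟦X⟧) :
    lderiv (HahnSeries.ofPowerSeries ℤ ℂ U) = HahnSeries.ofPowerSeries ℤ ℂ (d⁄dX ℂ U) := by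
  ext n
  rw [lderiv_coeff, coeff_coe, coeff_coe]
  rcases lt_trichotomy n (-1) with hn | rfl | hn
  · rw [if_pos (by omega), if_pos (by omega), mul_zero]
  · simp
  · lift n to ℕ using (by omega)
    rw [if_neg (by omega), if_neg (by omega), coeff_derivative, mul_comm]
    norm_cast

theorem miura_eq_iff_X_mul_sq_add_derivative_sub_eq_two_mul (U c : ℂ⟦X⟧) :
    (-(HahnSeries.single (-1 : ℤ) (1 : ℂ)) + HahnSeries.ofPowerSeries ℤ ℂ U) ^ 2 +
        lderiv (-(HahnSeries.single (-1 : ℤ) (1 : ℂ)) + HahnSeries.ofPowerSeries ℤ ℂ U) =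
      HahnSeries.single (-2 : ℤ) (2 : ℂ) + HahnSeries.ofPowerSeries ℤ ℂ c ↔
    X * (U ^ 2 + d⁄dX ℂ U - c) = 2 * U := by
  set S : LaurentSeries ℂ := HahnSeries.single (-1 : ℤ) 1
  set ι := HahnSeries.ofPowerSeries ℤ ℂ
  have hSX : S * ι X = 1 := by
    rw [HahnSeries.ofPowerSeries_X, HahnSeries.single_mul_single]; simp
  have hS_sq : S ^ 2 = HahnSeries.single (-2 : ℤ) 1 := by
    rw [sq, HahnSeries.single_mul_single]; norm_num
  have h_two : HahnSeries.single (-2 : ℤ) (2 : ℂ) = 2 * S ^ 2 := by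
    rw [hS_sq, two_mul, ← HahnSeries.single_add, one_add_one_eq_two]
  have hderiv : lderiv (-S + ι U) = S ^ 2 + ι (d⁄dX ℂ U) := by
    rw [lderiv_add, lderiv_neg, lderiv_single, lderiv_ofPowerSeries, hS_sq]
    norm_num [ι]
  have key : (-S + ι U) ^ 2 + lderiv (-S + ι U) - (HahnSeries.single (-2 : ℤ) 2 + ι c) =
      S * ι (X * (U ^ 2 + d⁄dX ℂ U - c) - 2 * U) := by
    simp only [hderiv, h_two, map_sub, map_mul, map_add, map_pow, map_ofNat]
    linear_combination (-(ι U ^ 2 + ι (d⁄dX ℂ U) - ι c)) * hSX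
  rw [← sub_eq_zero, key, mul_eq_zero, or_iff_right (HahnSeries.single_ne_zero one_ne_zero),
    map_eq_zero_iff ι HahnSeries.ofPowerSeries_injective, sub_eq_zero]

end Laurent

theorem hasDerivAt_two_div_sub_sq {𝕜 : Type*} [NontriviallyNormedField 𝕜] {a z : 𝕜} (h : z ≠ a) :
    HasDerivAt (fun x => 2 / (x - a) ^ 2) (4 / (a - z) ^ 3) z := by
  have hza : z - a ≠ 0 := sub_ne_zero.mpr h
  have hsq : HasDerivAt (fun x => (x - a) ^ 2) (2 * (z - a) ^ 1 * 1) z :=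
    ((hasDerivAt_id z).sub_const a).pow 2
  refine ((hasDerivAt_const z (2 : 𝕜)).div hsq (pow_ne_zero 2 hza)).congr_deriv ?_
  field_simp
  ring

theorem taylorCoeff_one {m : ℕ} {w : Fin m → ℂ} (hw : Function.Injective w) (j : Fin m) :
    taylorCoeff w j 1 = 4 * ∑ s ∈ univ.erase j, 1 / (w s - w j) ^ 3 := by
  have hderiv : HasDerivAt (fun z => ∑ s ∈ univ.erase j, 2 / (z - w s) ^ 2)
      (∑ s ∈ univ.erase j, 4 / (w s - w j) ^ 3) (w j) :=
    HasDerivAt.fun_sum fun s hs => hasDerivAt_two_div_sub_sq (hw.ne (ne_of_mem_erase hs)).symm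
  rw [taylorCoeff, iteratedDeriv_one, hderiv.deriv, mul_sum]
  simp [div_eq_mul_inv]

theorem rational_kdv_no_monodromy_tfae (m : ℕ) (w : Fin m → ℂ)
    (hwinj : Function.Injective w) :
    ((∀ j : Fin m, ∑ s ∈ univ.erase j, 1 / (w s - w j) ^ 3 = 0) ↔
      (∀ j : Fin m, taylorCoeff w j 1 = 0)) ∧
    ((∀ j : Fin m, taylorCoeff w j 1 = 0) ↔
      (∀ j : Fin m, ∃ U : PowerSeries ℂ,
        (-(HahnSeries.single (-1 : ℤ) (1 : ℂ)) + HahnSeries.ofPowerSeries ℤ ℂ U) ^ 2 +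
            lderiv (-(HahnSeries.single (-1 : ℤ) (1 : ℂ)) + HahnSeries.ofPowerSeries ℤ ℂ U)
          = HahnSeries.single (-2 : ℤ) (2 : ℂ)
            + HahnSeries.ofPowerSeries ℤ ℂ (PowerSeries.mk fun n => taylorCoeff w j n))) := by
  refine ⟨forall_congr' fun j => ?_, forall_congr' fun j => ?_⟩
  · rw [taylorCoeff_one hwinj j, mul_eq_zero, or_iff_right (by norm_num : (4 : ℂ) ≠ 0)]
  · simp_rw [miura_eq_iff_X_mul_sq_add_derivative_sub_eq_two_mul,
      PowerSeries.exists_X_mul_sq_add_derivative_sub_eq_two_mul_iff, PowerSeries.coeff_mk]
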